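/- arXiv:2004.04716 — 7 statements merged into one kernel-verified Lean document; each statement's English description precedes it below -/
import Mathlib

section
/- For 0 ≤ i ≤ n−4 define the operator L_i on A⟦t⟧ by L_i(V) := t²·P·V″ + t·(t·P′ − 2i·P)·V′ + (i·(i+1)·P − i·t·P′ + t²·P1)·V. If y ∈ A⟦t⟧ satisfies L(y) = 0, then (L_i ∘ L)(∂_i y) = 0; that is, the fourth-order operator M_i := L_i ∘ L annihilates the derivative of y with respect to the accessory parameter ρ_i. -/
noncomputable section

open PowerSeries

/-- The ring of accessory parameters: polynomials in `ρ_0, …, ρ_{n-4}` over `ℂ`. -/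
abbrev AccRing (n : ℕ) : Type := MvPolynomial (Fin (n - 3)) ℂ

/-- Coefficientwise partial derivative of a power series with respect to the
accessory parameter `ρ_i`. -/
noncomputable def pd {n : ℕ} (i : Fin (n - 3)) (u : PowerSeries (AccRing n)) :
    PowerSeries (AccRing n) :=
  PowerSeries.mk fun m => MvPolynomial.pderiv i (PowerSeries.coeff (R := AccRing n) m u)

/-- The polynomial `P = t·∏_{j=1}^{n-2}(t - α_j)`, viewed in `A⟦t⟧`. -/
noncomputable def Ppoly (n : ℕ) (α : Fin (n - 2) → ℂ) : PowerSeries (AccRing n) :=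
  X * ∏ j, (X - C (R := AccRing n) (MvPolynomial.C (α j)))

/-- The polynomial `P̂ = P/t = ∏_{j=1}^{n-2}(t - α_j)`, viewed in `A⟦t⟧`. -/
noncomputable def PhatPoly (n : ℕ) (α : Fin (n - 2) → ℂ) : PowerSeries (AccRing n) :=
  ∏ j, (X - C (R := AccRing n) (MvPolynomial.C (α j)))

/-- `κ = P̂(0) = (-1)^(n-2) ∏ α_j`. -/
noncomputable def kappa (n : ℕ) (α : Fin (n - 2) → ℂ) : ℂ :=
  (-1) ^ (n - 2) * ∏ j, α j

/-- `P1 = (1 - n/2)²·t^(n-3) - ∑_{i=0}^{n-4} ρ_i·t^i`, viewed in `A⟦t⟧`. -/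
noncomputable def P1poly (n : ℕ) : PowerSeries (AccRing n) :=
  C (R := AccRing n) (MvPolynomial.C ((1 - (n : ℂ) / 2) ^ 2)) * X ^ (n - 3)
    - ∑ i : Fin (n - 3), C (R := AccRing n) (MvPolynomial.X i) * X ^ (i : ℕ)

/-- The differential operator `L u = (P·u')' + P1·u`. -/
noncomputable def Lop (n : ℕ) (α : Fin (n - 2) → ℂ) (u : PowerSeries (AccRing n)) :
    PowerSeries (AccRing n) :=
  derivative (AccRing n) (Ppoly n α * derivative (AccRing n) u) + P1poly n * u

/-- Formal antiderivative with zero constant term. -/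
noncomputable def integ {A : Type*} [CommRing A] [Algebra ℚ A] (u : PowerSeries A) :
    PowerSeries A :=
  PowerSeries.mk fun m => if m = 0 then 0 else ((m : ℚ)⁻¹) • PowerSeries.coeff (R := A) (m - 1) u

/-- Formal substitution of the power series `S` (with zero constant term) into `G`. -/
noncomputable def substS {A : Type*} [CommSemiring A] (S G : PowerSeries A) : PowerSeries A :=
  PowerSeries.mk fun m =>
    ∑ j ∈ Finset.range (m + 1), PowerSeries.coeff (R := A) j G * PowerSeries.coeff (R := A) m (S ^ j)

/-- The operator `θ G = X·dG/dX`. -/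
noncomputable def theta {A : Type*} [CommRing A] (G : PowerSeries A) : PowerSeries A :=
  PowerSeries.X * PowerSeries.derivative A G

/-- The formal Eichler integral: divide the `m`-th coefficient by `m³`. -/
noncomputable def eich {A : Type*} [CommRing A] [Algebra ℚ A] (H : PowerSeries A) :
    PowerSeries A :=
  PowerSeries.mk fun m => (((m : ℚ) ^ 3)⁻¹) • PowerSeries.coeff (R := A) m H

/-- Formal exponential of a power series with zero constant term. -/
noncomputable def expS {A : Type*} [CommRing A] [Algebra ℚ A] (S : PowerSeries A) :
    PowerSeries A :=
  substS S (PowerSeries.exp A)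

/-!
Since `P` does not involve the accessory parameters and `∂_i P1 = -t ^ i`, applying `∂_i` to
`L y = 0` gives `L (∂_i y) = t ^ i y`. On the other hand `L_i` is, up to the factor `t ^ 2`, the
conjugate of `L` by `t ^ i`: `L_i (t ^ i V) = t ^ (i + 2) L V`. Hence
`L_i (L (∂_i y)) = t ^ (i + 2) L y = 0`.
-/

namespace Derivation

variable {R A : Type*} [CommSemiring R] [CommSemiring A] [Algebra R A] (D : Derivation R A A)

def powerSeriesMapCoeffs : Derivation R A⟦X⟧ A⟦X⟧ where
  toFun u := PowerSeries.mk fun m => D (coeff m u)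
  map_add' u v := by ext m; simp
  map_smul' r u := by ext m; simp
  map_one_eq_zero' := by ext m; by_cases hm : m = 0 <;> simp [coeff_one, hm]
  leibniz' u v := by
    ext m
    rw [smul_eq_mul, smul_eq_mul, mul_comm v]
    simp only [LinearMap.coe_mk, AddHom.coe_mk, smul_eq_mul, map_add, coeff_mk, coeff_mul, map_sum,
      leibniz, Finset.sum_add_distrib, mul_comm (coeff _ v)]

@[simp]
lemma coeff_powerSeriesMapCoeffs (u : A⟦X⟧) (m : ℕ) :
    coeff m (D.powerSeriesMapCoeffs u) = D (coeff m u) := by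
  simp [powerSeriesMapCoeffs]

lemma powerSeriesMapCoeffs_C_mul_X_pow (a : A) (m : ℕ) :
    D.powerSeriesMapCoeffs (C a * X ^ m) = C (D a) * X ^ m := by
  ext k
  simp only [coeff_powerSeriesMapCoeffs, coeff_C_mul_X_pow]
  split_ifs <;> simp

lemma powerSeriesMapCoeffs_map_algebraMap (f : R⟦X⟧) :
    D.powerSeriesMapCoeffs (map (algebraMap R A) f) = 0 := by
  ext k; simp

lemma powerSeriesMapCoeffs_derivative (u : A⟦X⟧) :
    D.powerSeriesMapCoeffs (derivative A u) = derivative A (D.powerSeriesMapCoeffs u) := by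
  ext k; simp [coeff_derivative, mul_comm]

end Derivation

section SturmOp

variable {R : Type*} [CommRing R]

def sturmOp (P Q u : R⟦X⟧) : R⟦X⟧ :=
  derivative R (P * derivative R u) + Q * u

/-- The operator `L_k` of the statement, with `P` and `P1` replaced by arbitrary `P` and `Q`. -/
def twistedSturmOp (k : ℕ) (P Q W : R⟦X⟧) : R⟦X⟧ :=
  X ^ 2 * P * derivative R (derivative R W)
    + X * (X * derivative R P - 2 * (k : R⟦X⟧) * P) * derivative R W
    + ((k : R⟦X⟧) * ((k : R⟦X⟧) + 1) * P - (k : R⟦X⟧) * X * derivative R P + X ^ 2 * Q) * W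

lemma Derivation.apply_sturmOp {S : Type*} [CommSemiring S] [Algebra S R⟦X⟧]
    (D : Derivation S R⟦X⟧ R⟦X⟧) (hD : ∀ u, D (derivative R u) = derivative R (D u))
    {P : R⟦X⟧} (hP : D P = 0) (Q u : R⟦X⟧) :
    D (sturmOp P Q u) = sturmOp P Q (D u) + D Q * u := by
  simp only [sturmOp, map_add, Derivation.leibniz, hD, hP, smul_eq_mul, map_zero]
  ring

lemma X_mul_derivative_X_pow (k : ℕ) :
    X * derivative R (X ^ k) = (k : R⟦X⟧) * X ^ k := by
  cases k with
  | zero => simp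
  | succ k =>
    rw [derivative_pow, derivative_X, Nat.add_sub_cancel]
    push_cast
    ring

lemma X_sq_mul_derivative_derivative_X_pow (k : ℕ) :
    X ^ 2 * derivative R (derivative R (X ^ k)) = (k : R⟦X⟧) * ((k : R⟦X⟧) - 1) * X ^ k := by
  have h := congrArg (derivative R) (X_mul_derivative_X_pow (R := R) k)
  simp only [Derivation.leibniz, derivative_X, smul_eq_mul, mul_one, Derivation.map_natCast,
    mul_zero, add_zero] at h
  linear_combination X * h + ((k : R⟦X⟧) - 1) * X_mul_derivative_X_pow (R := R) k

lemma twistedSturmOp_X_pow_mul (k : ℕ) (P Q V : R⟦X⟧) :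
    twistedSturmOp k P Q (X ^ k * V) = X ^ (k + 2) * sturmOp P Q V := by
  simp only [twistedSturmOp, sturmOp, Derivation.leibniz, map_add, smul_eq_mul]
  linear_combination (P * V) * X_sq_mul_derivative_derivative_X_pow (R := R) k
    + (2 * X * P * derivative R V + X * derivative R P * V - 2 * (k : R⟦X⟧) * P * V)
      * X_mul_derivative_X_pow (R := R) k

end SturmOp

section AccessoryParameters

variable {n : ℕ}

lemma pd_eq_powerSeriesMapCoeffs (i : Fin (n - 3)) :
    pd i = (MvPolynomial.pderiv i).powerSeriesMapCoeffs :=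
  rfl

lemma Lop_eq_sturmOp (α : Fin (n - 2) → ℂ) : Lop n α = sturmOp (Ppoly n α) (P1poly n) := rfl

lemma Ppoly_eq_map (α : Fin (n - 2) → ℂ) :
    Ppoly n α = map (algebraMap ℂ (AccRing n)) (X * ∏ j, (X - C (α j))) := by
  simp [Ppoly, map_prod, MvPolynomial.algebraMap_eq]

lemma pd_Ppoly (i : Fin (n - 3)) (α : Fin (n - 2) → ℂ) : pd i (Ppoly n α) = 0 := by
  rw [pd_eq_powerSeriesMapCoeffs, Ppoly_eq_map, Derivation.powerSeriesMapCoeffs_map_algebraMap]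

lemma pd_P1poly (i : Fin (n - 3)) : pd i (P1poly n) = -X ^ (i : ℕ) := by
  simp only [pd_eq_powerSeriesMapCoeffs, P1poly, map_sub, map_sum,
    Derivation.powerSeriesMapCoeffs_C_mul_X_pow, MvPolynomial.pderiv_C, MvPolynomial.pderiv_X,
    map_zero, zero_mul, zero_sub]
  simp [Pi.single_apply]

lemma Lop_pd_of_Lop_eq_zero (i : Fin (n - 3)) (α : Fin (n - 2) → ℂ) {y : PowerSeries (AccRing n)}
    (hy : Lop n α y = 0) : Lop n α (pd i y) = X ^ (i : ℕ) * y := by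
  have h := (MvPolynomial.pderiv i).powerSeriesMapCoeffs.apply_sturmOp
    (MvPolynomial.pderiv i).powerSeriesMapCoeffs_derivative (pd_Ppoly i α) (P1poly n) y
  rw [← Lop_eq_sturmOp, hy, map_zero, ← pd_eq_powerSeriesMapCoeffs, pd_P1poly] at h
  linear_combination -h

end AccessoryParameters

theorem stmt2_general (n : ℕ) (α : Fin (n - 2) → ℂ)
    (i : Fin (n - 3))
    (Li : PowerSeries (AccRing n) → PowerSeries (AccRing n))
    (hLi : ∀ V, Li V =
      X ^ 2 * Ppoly n α * derivative (AccRing n) (derivative (AccRing n) V)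
        + X * (X * derivative (AccRing n) (Ppoly n α)
            - 2 * ((i : ℕ) : PowerSeries (AccRing n)) * Ppoly n α) * derivative (AccRing n) V
        + (((i : ℕ) : PowerSeries (AccRing n)) * (((i : ℕ) : PowerSeries (AccRing n)) + 1)
              * Ppoly n α
            - ((i : ℕ) : PowerSeries (AccRing n)) * X * derivative (AccRing n) (Ppoly n α)
            + X ^ 2 * P1poly n) * V)
    (y : PowerSeries (AccRing n)) (hy : Lop n α y = 0) :
    Li (Lop n α (pd i y)) = 0 := by
  have hLi_eq : Li = twistedSturmOp (i : ℕ) (Ppoly n α) (P1poly n) := funext hLi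
  rw [hLi_eq, Lop_pd_of_Lop_eq_zero i α hy, twistedSturmOp_X_pow_mul, ← Lop_eq_sturmOp, hy,
    mul_zero]

/-- the fourth-order operator `M_i = L_i ∘ L` annihilates `∂_i y` whenever
`L(y) = 0`. -/
theorem stmt2 (n : ℕ) (hn : 4 ≤ n) (α : Fin (n - 2) → ℂ)
    (hα0 : ∀ j, α j ≠ 0) (hαinj : Function.Injective α)
    (i : Fin (n - 3))
    (Li : PowerSeries (AccRing n) → PowerSeries (AccRing n))
    (hLi : ∀ V, Li V =
      X ^ 2 * Ppoly n α * derivative (AccRing n) (derivative (AccRing n) V)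
        + X * (X * derivative (AccRing n) (Ppoly n α)
            - 2 * ((i : ℕ) : PowerSeries (AccRing n)) * Ppoly n α) * derivative (AccRing n) V
        + (((i : ℕ) : PowerSeries (AccRing n)) * (((i : ℕ) : PowerSeries (AccRing n)) + 1)
              * Ppoly n α
            - ((i : ℕ) : PowerSeries (AccRing n)) * X * derivative (AccRing n) (Ppoly n α)
            + X ^ 2 * P1poly n) * V)
    (y : PowerSeries (AccRing n)) (hy : Lop n α y = 0) :
    Li (Lop n α (pd i y)) = 0 :=
  stmt2_general n α i Li hLi y hy
end
end

section
/- For every c ∈ A there exists a unique power series y ∈ A⟦t⟧ with constant coefficient c satisfying L(y) = 0. In particular, the only power series solution of L(y) = 0 whose constant coefficient is 0 is y = 0. -/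
/-! Since `P` vanishes at `0` with `P'(0) = κ`, the operator `L` sends `t^k` to `κ k² t^(k-1)` plus
terms of degree `≥ k`. Hence coefficient `m` of `L y` is `κ (m+1)² y_{m+1}` plus an expression in
`y_0, …, y_m`, and as `κ (m+1)²` is a unit of `A`, the equation `L y = 0` determines `y` degree by
degree from `y_0`. -/

noncomputable section

open PowerSeries

namespace PowerSeries

variable {R : Type*} [CommRing R]

section Triangular

def IsTriangular (L : R⟦X⟧ →+ R⟦X⟧) (a : ℕ → R) : Prop :=
  ∀ m w, (∀ k ≤ m, coeff k w = 0) → coeff m (L w) = a m * coeff (m + 1) w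

variable {L : R⟦X⟧ →+ R⟦X⟧} {a : ℕ → R}

theorem IsTriangular.coeff_eq_add_coeff_trunc (hL : IsTriangular L a) (u : R⟦X⟧) (m : ℕ) :
    coeff m (L u) = a m * coeff (m + 1) u + coeff m (L (trunc (m + 1) u)) := by
  have h := hL m (u - trunc (m + 1) u) fun k hk => by
    simp [Polynomial.coeff_coe, coeff_trunc, Nat.lt_succ_of_le hk]
  simp only [map_sub, Polynomial.coeff_coe, coeff_trunc, lt_irrefl, if_false, sub_zero] at h
  linear_combination h

theorem IsTriangular.eq_zero (hL : IsTriangular L a) (ha : ∀ m, IsUnit (a m)) {y : R⟦X⟧}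
    (hy : L y = 0) (h0 : constantCoeff y = 0) : y = 0 := by
  suffices ∀ m, ∀ k ≤ m, coeff k y = 0 from ext fun k => by simpa using this k k le_rfl
  intro m
  induction m with
  | zero =>
    intro k hk
    rw [Nat.le_zero.1 hk, coeff_zero_eq_constantCoeff_apply, h0]
  | succ m ih =>
    intro k hk
    rcases Nat.of_le_succ hk with hk | rfl
    · exact ih k hk
    · have h := hL m y ih
      rwa [hy, map_zero, eq_comm, (ha m).mul_right_eq_zero] at h

variable (L a) in
noncomputable def triangularSolCoeff (c : R) : ℕ → R
  | 0 => c
  | m + 1 => -Ring.inverse (a m) *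
      coeff m (L (mk fun k => if k ≤ m then triangularSolCoeff c k else 0))

theorem coe_trunc_succ_mk (s : ℕ → R) (m : ℕ) :
    (trunc (m + 1) (mk s) : R⟦X⟧) = mk fun k => if k ≤ m then s k else 0 := by
  ext k
  simp [Polynomial.coeff_coe, coeff_trunc]

theorem IsTriangular.map_mk_triangularSolCoeff (hL : IsTriangular L a) (ha : ∀ m, IsUnit (a m))
    (c : R) : L (mk (triangularSolCoeff L a c)) = 0 := by
  ext m
  rw [hL.coeff_eq_add_coeff_trunc, coe_trunc_succ_mk, coeff_mk, triangularSolCoeff, neg_mul,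
    mul_neg, ← mul_assoc, Ring.mul_inverse_cancel _ (ha m), one_mul, neg_add_cancel, map_zero]

theorem IsTriangular.existsUnique (hL : IsTriangular L a) (ha : ∀ m, IsUnit (a m)) (c : R) :
    ∃! y : R⟦X⟧, constantCoeff y = c ∧ L y = 0 := by
  refine ⟨mk (triangularSolCoeff L a c), ⟨?_, hL.map_mk_triangularSolCoeff ha c⟩, ?_⟩
  · rw [← coeff_zero_eq_constantCoeff_apply, coeff_mk, triangularSolCoeff]
  · rintro y ⟨hy0, hy⟩
    refine sub_eq_zero.1 (hL.eq_zero ha ?_ ?_)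
    · rw [map_sub, hy, hL.map_mk_triangularSolCoeff ha c, sub_zero]
    · rw [map_sub, hy0, ← coeff_zero_eq_constantCoeff_apply, coeff_mk, triangularSolCoeff,
        sub_self]

end Triangular

section SturmLiouville

def sturmLiouville (P Q : R⟦X⟧) : R⟦X⟧ →+ R⟦X⟧ where
  toFun u := derivative R (P * derivative R u) + Q * u
  map_zero' := by simp
  map_add' u v := by simp only [map_add, mul_add]; ring

theorem isTriangular_sturmLiouville {P : R⟦X⟧} (hP : constantCoeff P = 0) (Q : R⟦X⟧) :
    IsTriangular (sturmLiouville P Q) fun m => coeff 1 P * (m + 1) ^ 2 := by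
  intro m w hw
  have hQw : coeff m (Q * w) = 0 := by
    rw [coeff_mul]
    refine Finset.sum_eq_zero fun p hp => ?_
    rw [Finset.HasAntidiagonal.mem_antidiagonal] at hp
    rw [hw p.2 (by omega), mul_zero]
  have hPw : coeff (m + 1) (P * derivative R w) = coeff 1 P * (coeff (m + 1) w * (m + 1)) := by
    rw [coeff_mul, Finset.sum_eq_single_of_mem (1, m) (by simp [add_comm]), coeff_derivative]
    rintro ⟨i, j⟩ hij hne
    rw [Finset.HasAntidiagonal.mem_antidiagonal] at hij
    rcases i with _ | _ | i
    · rw [coeff_zero_eq_constantCoeff_apply, hP, zero_mul]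
    · exact absurd (by congr 1; omega) hne
    · rw [coeff_derivative, hw (j + 1) (by omega), zero_mul, mul_zero]
  simp only [sturmLiouville, AddMonoidHom.coe_mk, ZeroHom.coe_mk, map_add, coeff_derivative, hPw,
    hQw]
  ring

theorem sturmLiouville_existsUnique [Algebra ℚ R] {P : R⟦X⟧} (hP₀ : constantCoeff P = 0)
    (hP₁ : IsUnit (coeff 1 P)) (Q : R⟦X⟧) (c : R) :
    ∃! y : R⟦X⟧, constantCoeff y = c ∧ sturmLiouville P Q y = 0 := by
  refine (isTriangular_sturmLiouville hP₀ Q).existsUnique (fun m => hP₁.mul (.pow 2 ?_)) c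
  simpa using (isUnit_iff_ne_zero.2 (Nat.cast_add_one_ne_zero (R := ℚ) m)).map (algebraMap ℚ R)

end SturmLiouville

end PowerSeries

open PowerSeries

theorem Lop_eq_sturmLiouville (n : ℕ) (α : Fin (n - 2) → ℂ) (u : PowerSeries (AccRing n)) :
    Lop n α u = sturmLiouville (Ppoly n α) (P1poly n) u :=
  rfl

theorem constantCoeff_Ppoly (n : ℕ) (α : Fin (n - 2) → ℂ) :
    constantCoeff (Ppoly n α) = 0 := by
  simp [Ppoly]

theorem isUnit_coeff_one_Ppoly {n : ℕ} {α : Fin (n - 2) → ℂ} (hα : ∀ j, α j ≠ 0) :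
    IsUnit (coeff 1 (Ppoly n α)) := by
  rw [Ppoly, coeff_succ_X_mul, coeff_zero_eq_constantCoeff_apply, map_prod,
    IsUnit.prod_univ_iff]
  intro j
  simpa using (isUnit_iff_ne_zero.2 (hα j)).map (MvPolynomial.C : ℂ →+* AccRing n)

theorem stmt3_general (n : ℕ) (α : Fin (n - 2) → ℂ)
    (hα0 : ∀ j, α j ≠ 0) :
    (∀ c : AccRing n, ∃! y : PowerSeries (AccRing n),
        constantCoeff (R := AccRing n) y = c ∧ Lop n α y = 0) ∧
    (∀ y : PowerSeries (AccRing n),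
        Lop n α y = 0 → constantCoeff (R := AccRing n) y = 0 → y = 0) := by
  simp only [Lop_eq_sturmLiouville]
  have h := sturmLiouville_existsUnique (constantCoeff_Ppoly n α) (isUnit_coeff_one_Ppoly hα0)
    (P1poly n)
  exact ⟨h, fun y hy h0 => (h 0).unique ⟨h0, hy⟩ ⟨map_zero _, map_zero _⟩⟩

/-- for every `c ∈ A` there is a unique power series solution of `L(y) = 0`
with constant coefficient `c`; in particular the only solution with constant coefficient `0`
is `y = 0`. -/
theorem stmt3 (n : ℕ) (hn : 4 ≤ n) (α : Fin (n - 2) → ℂ)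
    (hα0 : ∀ j, α j ≠ 0) (hαinj : Function.Injective α) :
    (∀ c : AccRing n, ∃! y : PowerSeries (AccRing n),
        constantCoeff (R := AccRing n) y = c ∧ Lop n α y = 0) ∧
    (∀ y : PowerSeries (AccRing n),
        Lop n α y = 0 → constantCoeff (R := AccRing n) y = 0 → y = 0) :=
  stmt3_general n α hα0
end
end

section
/- The power series Q satisfies the change-of-variable identity Q′·P·y² = κ·Q in A⟦t⟧ (the formal version of dQ/Q = κ·dt/(P·y²)). -/
noncomputable section

open PowerSeries

/-!
`P̂y² + P(b′y − y′b) = P·(y ŷ′ − y′ ŷ)` is the Wronskian of `y` and `ŷ = y log t + b` weighted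
by `P`; by Lagrange's identity it is constant, hence equal to its value `P̂(0) = κ` at `t = 0`.
Since `(b/y)′ = (b′y − y′b)/y²` and `exp` is its own derivative, `Q = t·exp(b/y)` satisfies
`Q′ = Q/t · (1 + t(b/y)′)`, and multiplying by `P y² = t P̂ y²` gives `κ Q`.
-/

section Substitution

variable {A : Type*}

theorem coeff_pow_eq_zero_of_lt [CommSemiring A] {S : A⟦X⟧} (hS : constantCoeff S = 0) {m j : ℕ}
    (h : m < j) : coeff m (S ^ j) = 0 :=
  X_pow_dvd_iff.mp (pow_dvd_pow_of_dvd (X_dvd_iff.mpr hS) j) m h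

theorem substS_eq_subst [CommRing A] {S : A⟦X⟧} (hS : constantCoeff S = 0) (G : A⟦X⟧) :
    substS S G = G.subst S := by
  ext m
  rw [coeff_subst' (HasSubst.of_constantCoeff_zero' hS), substS, coeff_mk,
    finsum_eq_sum_of_support_subset _ (s := Finset.range (m + 1))]
  · simp only [smul_eq_mul]
  · intro j hj
    rw [Function.mem_support] at hj
    rw [Finset.coe_range, Set.mem_Iio]
    by_contra! hjm
    exact hj (by rw [coeff_pow_eq_zero_of_lt hS (by omega), smul_zero])

theorem derivative_expS [CommRing A] [Algebra ℚ A] {S : A⟦X⟧} (hS : constantCoeff S = 0) :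
    d⁄dX A (expS S) = d⁄dX A S * expS S := by
  rw [expS, substS_eq_subst hS, derivative_subst (HasSubst.of_constantCoeff_zero' hS),
    derivative_exp, mul_comm]

end Substitution

section Derivative

variable {R : Type*} [CommRing R]

theorem derivative_mul (u v : R⟦X⟧) : d⁄dX R (u * v) = u * d⁄dX R v + v * d⁄dX R u := by
  rw [Derivation.leibniz, smul_eq_mul, smul_eq_mul]

theorem derivative_mul_wronskian (p q u v : R⟦X⟧) :
    d⁄dX R (p * (d⁄dX R u * v - d⁄dX R v * u))
      = v * (d⁄dX R (p * d⁄dX R u) + q * u) - u * (d⁄dX R (p * d⁄dX R v) + q * v) := by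
  simp only [derivative_mul, map_sub]
  ring

theorem derivative_mul_inv_mul_sq {y yinv : R⟦X⟧} (hyinv : y * yinv = 1) (b : R⟦X⟧) :
    d⁄dX R (b * yinv) * y ^ 2 = d⁄dX R b * y - d⁄dX R y * b := by
  have hdyinv : d⁄dX R y * yinv + y * d⁄dX R yinv = 0 := by
    have h := congrArg (d⁄dX R) hyinv
    rw [derivative_mul, derivative_one] at h
    linear_combination h
  rw [derivative_mul]
  linear_combination (d⁄dX R b * y - d⁄dX R y * b) * hyinv + (b * y) * hdyinv

end Derivative

theorem constantCoeff_PhatPoly (n : ℕ) (α : Fin (n - 2) → ℂ) :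
    constantCoeff (PhatPoly n α) = MvPolynomial.C (kappa n α) := by
  simp only [PhatPoly, kappa, map_prod, map_sub, constantCoeff_X, constantCoeff_C, zero_sub,
    map_mul, map_pow, map_neg, map_one]
  rw [Finset.prod_congr rfl (fun j _ => neg_eq_neg_one_mul (MvPolynomial.C (α j) : AccRing n)),
    Finset.prod_mul_distrib, Finset.prod_const, Finset.card_univ, Fintype.card_fin]

theorem wronskian_log_solution_eq_kappa (n : ℕ) (α : Fin (n - 2) → ℂ) {y b : (AccRing n)⟦X⟧}
    (hy1 : constantCoeff y = 1) (hy : Lop n α y = 0)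
    (hb : Lop n α b + 2 * PhatPoly n α * d⁄dX (AccRing n) y
        + d⁄dX (AccRing n) (PhatPoly n α) * y = 0) :
    PhatPoly n α * y ^ 2 + Ppoly n α * (d⁄dX (AccRing n) b * y - d⁄dX (AccRing n) y * b)
      = C (MvPolynomial.C (kappa n α)) := by
  apply derivative.ext
  · rw [map_add, derivative_mul_wronskian _ (P1poly n), ← Lop, ← Lop, derivative_C,
      derivative_mul, pow_two, derivative_mul]
    linear_combination y * hb - b * hy
  · simp [Ppoly, hy1, constantCoeff_PhatPoly]

theorem stmt6_general (n : ℕ) (α : Fin (n - 2) → ℂ)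
    (y b yinv Q : PowerSeries (AccRing n))
    (hy1 : constantCoeff (R := AccRing n) y = 1) (hy : Lop n α y = 0)
    (hb0 : constantCoeff (R := AccRing n) b = 0)
    (hb : Lop n α b + 2 * PhatPoly n α * derivative (AccRing n) y
        + derivative (AccRing n) (PhatPoly n α) * y = 0)
    (hyinv : y * yinv = 1)
    (hQ : Q = X * expS (b * yinv)) :
    derivative (AccRing n) Q * Ppoly n α * y ^ 2
      = C (R := AccRing n) (MvPolynomial.C (kappa n α)) * Q := by
  have hs0 : constantCoeff (b * yinv) = 0 := by rw [map_mul, hb0, zero_mul]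
  have hW := wronskian_log_solution_eq_kappa n α hy1 hy hb
  have hds := derivative_mul_inv_mul_sq hyinv b
  have hdQ : d⁄dX (AccRing n) Q
      = expS (b * yinv) + X * (d⁄dX (AccRing n) (b * yinv) * expS (b * yinv)) := by
    rw [hQ, derivative_mul, derivative_X, derivative_expS hs0]
    ring
  have hP : Ppoly n α = X * PhatPoly n α := rfl
  rw [hP] at hW ⊢
  rw [hdQ, hQ]
  linear_combination (X * expS (b * yinv)) * hW
    + (X * X * PhatPoly n α * expS (b * yinv)) * hds

/-- the change-of-variable identity `Q'·P·y² = κ·Q`. -/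
theorem stmt6 (n : ℕ) (hn : 4 ≤ n) (α : Fin (n - 2) → ℂ)
    (hα0 : ∀ j, α j ≠ 0) (hαinj : Function.Injective α)
    (y b yinv Q : PowerSeries (AccRing n))
    (hy1 : constantCoeff (R := AccRing n) y = 1) (hy : Lop n α y = 0)
    (hb0 : constantCoeff (R := AccRing n) b = 0)
    (hb : Lop n α b + 2 * PhatPoly n α * derivative (AccRing n) y
        + derivative (AccRing n) (PhatPoly n α) * y = 0)
    (hyinv : y * yinv = 1)
    (hQ : Q = X * expS (b * yinv)) :
    derivative (AccRing n) Q * Ppoly n α * y ^ 2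
      = C (R := AccRing n) (MvPolynomial.C (kappa n α)) * Q :=
  stmt6_general n α y b yinv Q hy1 hy hb0 hb hyinv hQ
end
end

section
/- For every 0 ≤ i ≤ n−4 one has κ·∫(t^i·y²) = subst Q (θ²H̃_i) in A⟦t⟧; that is, the paper's key formula κ·∫₀^T t^i y² dt = ∫₀^Q H_i(Q₁) dQ₁/Q₁ holds at the level of formal power series. -/
noncomputable section

open PowerSeries

/-!
Write `S = b/y`, so that `Q = t·exp S`. The logarithmic derivative of `Q` is
`1/t + S' = (P̂ y² + P (b'y - by')) / (P y²)`, and the numerator is a Wronskian-type expression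
whose derivative vanishes by the two differential equations for `y` and `b`; comparing constant
terms, it equals `κ`. Hence `Q'·P·y² = κ·Q`. On the other side, `θ³H̃ = H` gives
`Q·(d/dt)(θ²H̃ ∘ Q) = Q'·(H ∘ Q) = Q'·P·tⁱ·y⁴ = κ·Q·tⁱ·y²`, and `Q = t·(unit)` can be cancelled.
Both sides vanish at `t = 0`, so they are equal.
-/

namespace PowerSeries

variable {A : Type*} [CommRing A]

theorem coeff_pow_eq_zero_of_lt {S : A⟦X⟧} (hS : constantCoeff S = 0) {m j : ℕ} (h : m < j) :
    coeff m (S ^ j) = 0 :=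
  X_pow_dvd_iff.mp (pow_dvd_pow_of_dvd (X_dvd_iff.mpr hS) j) m h

theorem substS_eq_subst {S : A⟦X⟧} (hS : constantCoeff S = 0) (G : A⟦X⟧) :
    substS S G = G.subst S := by
  ext m
  rw [substS, coeff_mk, coeff_subst' (.of_constantCoeff_zero' hS),
    finsum_eq_sum_of_support_subset _ (s := Finset.range (m + 1))]
  · simp only [smul_eq_mul]
  · intro j hj
    contrapose! hj
    simp [coeff_pow_eq_zero_of_lt hS (by simpa using hj)]

theorem coeff_theta (G : A⟦X⟧) (m : ℕ) : coeff m (theta G) = m * coeff m G := by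
  cases m with
  | zero => simp [theta]
  | succ m => rw [theta, coeff_succ_X_mul, coeff_derivative, mul_comm]; push_cast; rfl

theorem eq_C_of_derivative_eq_zero [IsAddTorsionFree A] {W : A⟦X⟧} (h : d⁄dX A W = 0) :
    W = C (constantCoeff W) :=
  derivative.ext (by simp [h]) (by simp)

theorem derivative_wronskian_eq_zero {P Ph P1 y b : A⟦X⟧}
    (hy : d⁄dX A (P * d⁄dX A y) + P1 * y = 0)
    (hb : d⁄dX A (P * d⁄dX A b) + P1 * b + 2 * Ph * d⁄dX A y + d⁄dX A Ph * y = 0) :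
    d⁄dX A (Ph * y ^ 2 + P * (d⁄dX A b * y - b * d⁄dX A y)) = 0 := by
  simp only [map_add, map_sub, Derivation.leibniz, Derivation.leibniz_pow, smul_eq_mul] at hy hb ⊢
  linear_combination y * hb - b * hy

theorem subst_theta {Q : A⟦X⟧} (hQ : HasSubst Q) (G : A⟦X⟧) :
    (theta G).subst Q = Q * (d⁄dX A G).subst Q := by
  rw [theta, subst_mul hQ, subst_X hQ]

variable [Algebra ℚ A]

theorem derivative_integ (u : A⟦X⟧) : d⁄dX A (integ u) = u := by
  ext m
  rw [coeff_derivative, integ, coeff_mk, if_neg m.succ_ne_zero, Nat.add_sub_cancel,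
    ← Nat.cast_succ, ← map_natCast (algebraMap ℚ A), mul_comm, ← Algebra.smul_def, smul_smul,
    mul_inv_cancel₀ (by positivity), one_smul]

theorem constantCoeff_integ (u : A⟦X⟧) : constantCoeff (integ u) = 0 := by
  rw [← coeff_zero_eq_constantCoeff_apply, integ, coeff_mk, if_pos rfl]

theorem theta_theta_theta_eich {H : A⟦X⟧} (hH : constantCoeff H = 0) :
    theta (theta (theta (eich H))) = H := by
  ext m
  rw [coeff_theta, coeff_theta, coeff_theta, eich, coeff_mk]
  rcases m.eq_zero_or_pos with rfl | hm
  · simp [hH]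
  · have hsmul (x : A) : (m : A) * x = (m : ℚ) • x := by rw [Algebra.smul_def, map_natCast]
    rw [hsmul, hsmul, hsmul, smul_smul, smul_smul, smul_smul]
    convert one_smul ℚ (coeff m H)
    field_simp

theorem constantCoeff_expS (S : A⟦X⟧) : constantCoeff (expS S) = 1 := by
  rw [← coeff_zero_eq_constantCoeff_apply, expS, substS, coeff_mk]
  simp

theorem derivative_expS {S : A⟦X⟧} (hS : constantCoeff S = 0) :
    d⁄dX A (expS S) = d⁄dX A S * expS S := by
  rw [expS, substS_eq_subst hS, derivative_subst (.of_constantCoeff_zero' hS), derivative_exp,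
    mul_comm]

theorem isLeftRegular_X_mul_expS (S : A⟦X⟧) : IsLeftRegular (X * expS S) :=
  IsLeftRegular.mul (fun _ _ ↦ X_mul_cancel)
    (isUnit_iff_constantCoeff.mpr (constantCoeff_expS S ▸ isUnit_one)).isRegular.left

theorem derivative_X_mul_expS_mul {P Ph y b yinv : A⟦X⟧} (hP : P = X * Ph)
    (hb0 : constantCoeff b = 0) (hyinv : y * yinv = 1) :
    d⁄dX A (X * expS (b * yinv)) * (P * y ^ 2)
      = (Ph * y ^ 2 + P * (d⁄dX A b * y - b * d⁄dX A y)) * (X * expS (b * yinv)) := by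
  have hS0 : constantCoeff (b * yinv) = 0 := by rw [map_mul, hb0, zero_mul]
  have hyinv' : d⁄dX A y * yinv + y * d⁄dX A yinv = 0 := by
    simpa [Derivation.leibniz, add_comm, mul_comm] using congrArg (d⁄dX A) hyinv
  rw [Derivation.leibniz, derivative_expS hS0, Derivation.leibniz, derivative_X, hP]
  simp only [smul_eq_mul]
  linear_combination (X * X * Ph * expS (b * yinv)) *
    (d⁄dX A b * y * hyinv + b * y * hyinv' - b * d⁄dX A y * hyinv)

theorem C_mul_integ_eq_substS_theta_theta_eich {P Ph P1 y b yinv Q H : A⟦X⟧} {κ : A} {k : ℕ}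
    (hP : P = X * Ph) (hPh : constantCoeff Ph = κ)
    (hy1 : constantCoeff y = 1) (hy : d⁄dX A (P * d⁄dX A y) + P1 * y = 0)
    (hb0 : constantCoeff b = 0)
    (hb : d⁄dX A (P * d⁄dX A b) + P1 * b + 2 * Ph * d⁄dX A y + d⁄dX A Ph * y = 0)
    (hyinv : y * yinv = 1) (hQ : Q = X * expS (b * yinv))
    (hH0 : constantCoeff H = 0) (hH : substS Q H = P * X ^ k * y ^ 4) :
    C κ * integ (X ^ k * y ^ 2) = substS Q (theta (theta (eich H))) := by
  have := IsAddTorsionFree.of_module_rat A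
  have hQ0 : constantCoeff Q = 0 := by simp [hQ]
  have hW : Ph * y ^ 2 + P * (d⁄dX A b * y - b * d⁄dX A y) = C κ := by
    rw [eq_C_of_derivative_eq_zero (derivative_wronskian_eq_zero hy hb)]
    simp [hP, hPh, hy1]
  have hQ' : d⁄dX A Q * (P * y ^ 2) = C κ * Q := by
    rw [hQ, derivative_X_mul_expS_mul hP hb0 hyinv, hW]
  set G := theta (theta (eich H))
  have hQG : Q * (d⁄dX A G).subst Q = P * X ^ k * y ^ 4 := by
    rw [← hH, substS_eq_subst hQ0, ← theta_theta_theta_eich hH0,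
      subst_theta (.of_constantCoeff_zero' hQ0)]
  rw [substS_eq_subst hQ0]
  refine derivative.ext ?_ ?_
  · rw [derivative_subst (.of_constantCoeff_zero' hQ0)]
    apply hQ ▸ isLeftRegular_X_mul_expS (b * yinv)
    calc Q * d⁄dX A (C κ * integ (X ^ k * y ^ 2)) = C κ * Q * (X ^ k * y ^ 2) := by
          simp only [Derivation.leibniz, derivative_integ, smul_eq_mul, derivative_C, mul_zero,
            add_zero]
          ring
      _ = d⁄dX A Q * (P * X ^ k * y ^ 4) := by linear_combination (-(X ^ k * y ^ 2)) * hQ'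
      _ = Q * ((d⁄dX A G).subst Q * d⁄dX A Q) := by rw [← hQG]; ring
  · rw [map_mul, constantCoeff_integ, mul_zero]
    exact (constantCoeff_subst_eq_zero hQ0 G (by simp [G, theta])).symm

end PowerSeries

theorem stmt7_general (n : ℕ) (α : Fin (n - 2) → ℂ)
    (y b yinv Q : PowerSeries (AccRing n))
    (hy1 : constantCoeff (R := AccRing n) y = 1) (hy : Lop n α y = 0)
    (hb0 : constantCoeff (R := AccRing n) b = 0)
    (hb : Lop n α b + 2 * PhatPoly n α * derivative (AccRing n) y
        + derivative (AccRing n) (PhatPoly n α) * y = 0)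
    (hyinv : y * yinv = 1)
    (hQ : Q = X * expS (b * yinv))
    (i : Fin (n - 3)) (H : PowerSeries (AccRing n))
    (hH0 : constantCoeff (R := AccRing n) H = 0)
    (hH : substS Q H = Ppoly n α * X ^ (i : ℕ) * y ^ 4) :
    C (R := AccRing n) (MvPolynomial.C (kappa n α)) * integ (X ^ (i : ℕ) * y ^ 2)
      = substS Q (theta (theta (eich H))) :=
  PowerSeries.C_mul_integ_eq_substS_theta_theta_eich rfl (constantCoeff_PhatPoly n α) hy1 hy hb0 hb
    hyinv hQ hH0 hH

/-- `κ·∫(t^i·y²) = (θ²H̃_i) ∘ Q`. -/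
theorem stmt7 (n : ℕ) (hn : 4 ≤ n) (α : Fin (n - 2) → ℂ)
    (hα0 : ∀ j, α j ≠ 0) (hαinj : Function.Injective α)
    (y b yinv Q : PowerSeries (AccRing n))
    (hy1 : constantCoeff (R := AccRing n) y = 1) (hy : Lop n α y = 0)
    (hb0 : constantCoeff (R := AccRing n) b = 0)
    (hb : Lop n α b + 2 * PhatPoly n α * derivative (AccRing n) y
        + derivative (AccRing n) (PhatPoly n α) * y = 0)
    (hyinv : y * yinv = 1)
    (hQ : Q = X * expS (b * yinv))
    (i : Fin (n - 3)) (H : PowerSeries (AccRing n))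
    (hH0 : constantCoeff (R := AccRing n) H = 0)
    (hH : substS Q H = Ppoly n α * X ^ (i : ℕ) * y ^ 4) :
    C (R := AccRing n) (MvPolynomial.C (kappa n α)) * integ (X ^ (i : ℕ) * y ^ 2)
      = substS Q (theta (theta (eich H))) :=
  stmt7_general n α y b yinv Q hy1 hy hb0 hb hyinv hQ i H hH0 hH
end
end

section
/- Assume ∂g_j = 2·h̃·(D g_j) + (k − 2j)·h̃′·g_j for all 0 ≤ j ≤ p, and ∂φ = h̃″ + 2·h̃·(Dφ) + 2·h̃′·φ. Then g := ∑_{j=0}^p g_j·φ^j satisfies ∂g = 2·h̃·(D g) + k·h̃′·g + h̃″·∑_{j=1}^p j·g_j·φ^{j−1}. (This is the algebraic core of the paper's main theorem: for a quasimodular form g = ∑ g_j φ^j of weight k on Γ, ∂_{i,Q} g = 2·h̃_i·D g + h̃_i′·W g + h̃_i″·δ g, where W is the weight operator and δ the depth-lowering operator determined by δφ = 1.) -/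
noncomputable section

open PowerSeries

/-!
Subtracting `2 h̃ D` from `∂` leaves a derivation `E` for which each `g_j` is an eigenvector with
eigenvalue `(k - 2j) h̃'`, while `E φ = h̃'' + 2 h̃' φ`. By the Leibniz rule,
`E (g_j φ^j) = k h̃' g_j φ^j + h̃'' j g_j φ^(j-1)`: the weight `2j` carried by `φ^j` exactly
compensates the shift in the weight of `g_j`, and the anomaly `h̃''` of `φ` produces `δ g`.
-/

section

open Finset

variable {R : Type*} [CommRing R] (E : Derivation ℤ R R) {w e φ : R} {m : ℤ}

theorem Derivation.map_mul_pow_of_weight {a : R} {j : ℕ}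
    (ha : E a = ((m - 2 * j : ℤ) : R) * w * a) (hφ : E φ = e + 2 * w * φ) :
    E (a * φ ^ j) = m * w * (a * φ ^ j) + e * (j * a * φ ^ (j - 1)) := by
  have hpow : (j : R) * φ ^ (j - 1) * φ = j * φ ^ j := by
    cases j with
    | zero => simp
    | succ n => rw [Nat.add_sub_cancel, mul_assoc, ← pow_succ]
  rw [E.leibniz, E.leibniz_pow, ha, hφ, smul_eq_mul, nsmul_eq_mul, smul_eq_mul]
  push_cast
  linear_combination (2 * w * a) * hpow

theorem Derivation.map_sum_mul_pow_of_weight {p : ℕ} {g : ℕ → R}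
    (hg : ∀ j ≤ p, E (g j) = ((m - 2 * j : ℤ) : R) * w * g j) (hφ : E φ = e + 2 * w * φ) :
    E (∑ j ∈ range (p + 1), g j * φ ^ j)
      = m * w * ∑ j ∈ range (p + 1), g j * φ ^ j
        + e * ∑ j ∈ Icc 1 p, (j : R) * g j * φ ^ (j - 1) := by
  have hIcc : ∑ j ∈ Icc 1 p, (j : R) * g j * φ ^ (j - 1)
      = ∑ j ∈ range (p + 1), (j : R) * g j * φ ^ (j - 1) := by
    rw [sum_range_eq_add_Ico (n := p + 1) _ (by omega), Ico_add_one_right_eq_Icc, Nat.cast_zero,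
      zero_mul, zero_mul, zero_add]
  rw [hIcc, map_sum, mul_sum, mul_sum, ← sum_add_distrib]
  exact sum_congr rfl fun j hj ↦
    E.map_mul_pow_of_weight (hg j (Nat.lt_succ_iff.mp (mem_range.mp hj))) hφ

end

/-- the algebraic core of the main theorem, for `∂ = ∂_{i,Q}`:
if `∂g_j = 2·h̃·Dg_j + (k-2j)·h̃'·g_j` and `∂φ = h̃'' + 2·h̃·Dφ + 2·h̃'·φ`, then
`g = ∑ g_j·φ^j` satisfies `∂g = 2·h̃·Dg + k·h̃'·g + h̃''·∑ j·g_j·φ^(j-1)`. -/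
theorem stmt14 {R : Type*} [CommRing R] (D Dp : Derivation ℤ R R)
    (ht φ : R) (k : ℤ) (p : ℕ) (g : ℕ → R)
    (hg : ∀ j ≤ p, Dp (g j) = 2 * ht * D (g j) + ((k - 2 * (j : ℤ) : ℤ) : R) * D ht * g j)
    (hφ : Dp φ = D (D ht) + 2 * ht * D φ + 2 * D ht * φ) :
    Dp (∑ j ∈ Finset.range (p + 1), g j * φ ^ j)
      = 2 * ht * D (∑ j ∈ Finset.range (p + 1), g j * φ ^ j)
        + (k : R) * D ht * (∑ j ∈ Finset.range (p + 1), g j * φ ^ j)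
        + D (D ht) * ∑ j ∈ Finset.Icc 1 p, (j : R) * g j * φ ^ (j - 1) := by
  set E := Dp - (2 * ht) • D
  have hE (x : R) : E x = Dp x - 2 * ht * D x := rfl
  have hEg (j : ℕ) (hj : j ≤ p) : E (g j) = ((k - 2 * j : ℤ) : R) * D ht * g j := by
    rw [hE, hg j hj]; ring
  have hEφ : E φ = D (D ht) + 2 * D ht * φ := by
    rw [hE, hφ]; ring
  have key := E.map_sum_mul_pow_of_weight hEg hEφ
  rw [hE] at key
  linear_combination key
end
end

section
/- Assume ∂g_j = (k − 2j)·h̃′·g_j for all 0 ≤ j ≤ p, and ∂φ = h̃″ + 2·h̃′·φ. Then g := ∑_{j=0}^p g_j·φ^j satisfies ∂g = k·h̃′·g + h̃″·∑_{j=1}^p j·g_j·φ^{j−1}. (This is the algebraic core of the first formula of the paper's main theorem: for a quasimodular form g = ∑ g_j φ^j of weight k on Γ, ∂_{i,T} g = h̃_i′·W g + h̃_i″·δ g, where W is the weight operator and δ the depth-lowering operator determined by δφ = 1.) -/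
noncomputable section

open PowerSeries

/-! Give `g_j` weight `k - 2j` and `φ` weight `2`, so that every `g_j φ^j` has weight `k`. On an
element of weight `w` the derivation acts as multiplication by `w·h̃'`, except that `φ` carries the
extra term `h̃''`; by the Leibniz rule that term contributes `j·h̃''·g_j φ^(j-1)` to `∂(g_j φ^j)`. -/

section WeightedDerivation

variable {S R : Type*} [CommSemiring S] [CommRing R] [Algebra S R] (Dp : Derivation S R R)

theorem Derivation.apply_mul_pow_of_weight {a φ w e f : R} (n : ℕ)
    (ha : Dp a = (w - 2 * n) * e * a) (hφ : Dp φ = f + 2 * e * φ) :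
    Dp (a * φ ^ n) = w * e * (a * φ ^ n) + f * (n * a * φ ^ (n - 1)) := by
  rw [Derivation.leibniz, Derivation.leibniz_pow, ha, hφ, nsmul_eq_mul, smul_eq_mul, smul_eq_mul]
  cases n with
  | zero => simp
  | succ m =>
    rw [Nat.add_sub_cancel, pow_succ]
    push_cast
    ring

theorem Derivation.apply_sum_mul_pow_of_weight {φ w e f : R} (p : ℕ) (g : ℕ → R)
    (hg : ∀ j ≤ p, Dp (g j) = (w - 2 * j) * e * g j) (hφ : Dp φ = f + 2 * e * φ) :
    Dp (∑ j ∈ Finset.range (p + 1), g j * φ ^ j)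
      = w * e * ∑ j ∈ Finset.range (p + 1), g j * φ ^ j
        + f * ∑ j ∈ Finset.range (p + 1), (j : R) * g j * φ ^ (j - 1) := by
  rw [map_sum, Finset.mul_sum, Finset.mul_sum, ← Finset.sum_add_distrib]
  refine Finset.sum_congr rfl fun j hj => ?_
  exact Dp.apply_mul_pow_of_weight j (hg j (Nat.lt_succ_iff.mp (Finset.mem_range.mp hj))) hφ

end WeightedDerivation

theorem Finset.sum_range_succ_eq_sum_Icc_of_apply_zero {M : Type*} [AddCommMonoid M]
    {f : ℕ → M} (p : ℕ) (h0 : f 0 = 0) :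
    ∑ j ∈ Finset.range (p + 1), f j = ∑ j ∈ Finset.Icc 1 p, f j := by
  rw [Finset.range_eq_Ico, Finset.sum_eq_sum_Ico_succ_bot (Nat.succ_pos p), h0, zero_add,
    zero_add, Nat.succ_eq_add_one, Finset.Ico_add_one_right_eq_Icc]

/-- the algebraic core of the main theorem, for `∂ = ∂_{i,T}`:
if `∂g_j = (k-2j)·h̃'·g_j` and `∂φ = h̃'' + 2·h̃'·φ`, then `g = ∑ g_j·φ^j` satisfies
`∂g = k·h̃'·g + h̃''·∑ j·g_j·φ^(j-1)`. -/
theorem stmt15 {R : Type*} [CommRing R] (D Dp : Derivation ℤ R R)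
    (ht φ : R) (k : ℤ) (p : ℕ) (g : ℕ → R)
    (hg : ∀ j ≤ p, Dp (g j) = ((k - 2 * (j : ℤ) : ℤ) : R) * D ht * g j)
    (hφ : Dp φ = D (D ht) + 2 * D ht * φ) :
    Dp (∑ j ∈ Finset.range (p + 1), g j * φ ^ j)
      = (k : R) * D ht * (∑ j ∈ Finset.range (p + 1), g j * φ ^ j)
        + D (D ht) * ∑ j ∈ Finset.Icc 1 p, (j : R) * g j * φ ^ (j - 1) := by
  have hg' : ∀ j ≤ p, Dp (g j) = ((k : R) - 2 * j) * D ht * g j :=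
    fun j hj => by exact_mod_cast hg j hj
  rw [Dp.apply_sum_mul_pow_of_weight p g hg' hφ,
    Finset.sum_range_succ_eq_sum_Icc_of_apply_zero (f := fun j => (j : R) * g j * φ ^ (j - 1)) p
      (by simp)]
end
end

section
/- Let r > 0 and let y, b : B(0,r) → ℂ be analytic functions on the open ball B(0,r) ⊆ ℂ such that (P·y′)′ + P1·y = 0 on B(0,r) and (P·b′)′ + P1·b + 2·P̂·y′ + P̂′·y = 0 on B(0,r). Then the function ŷ(t) := y(t)·log t + b(t) (with the principal branch of the complex logarithm) satisfies (P·ŷ′)′ + P1·ŷ = 0 at every point of B(0,r) not lying on the closed negative real axis. -/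
/-!
Away from the cut, `ŷ' = y'·log t + y/t + b'`, and since `P = t·P̂` the term `y/t` turns into
`P̂·y` after multiplying by `P`. Hence near such a point `P·ŷ' = (P·y')·log t + P̂·y + P·b'`, and
differentiating once more gives
`(P·ŷ')' + P1·ŷ = ((P·y')' + P1·y)·log t + ((P·b')' + P1·b + 2·P̂·y' + P̂'·y)`,
where the second `P̂·y'` comes from `(P·y')·(log t)' = P̂·y'`. Both brackets vanish.
-/

noncomputable section

open PowerSeries

open Complex Filter Topology

theorem hasDerivAt_mul_log_add {y b : ℂ → ℂ} {s : ℂ} (hy : DifferentiableAt ℂ y s)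
    (hb : DifferentiableAt ℂ b s) (hs : s ∈ slitPlane) :
    HasDerivAt (fun z => y z * log z + b z) (deriv y s * log s + y s * s⁻¹ + deriv b s) s :=
  (hy.hasDerivAt.mul (hasDerivAt_log hs)).add hb.hasDerivAt

theorem eval_mul_deriv_mul_log_add_eventuallyEq {P Phat : Polynomial ℂ}
    (hPhat : P = Polynomial.X * Phat) {y b : ℂ → ℂ} {t : ℂ}
    (hy : ∀ᶠ z in 𝓝 t, DifferentiableAt ℂ y z) (hb : ∀ᶠ z in 𝓝 t, DifferentiableAt ℂ b z)
    (ht : t ∈ slitPlane) :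
    (fun s => P.eval s * deriv (fun z => y z * log z + b z) s) =ᶠ[𝓝 t]
      fun s => P.eval s * deriv y s * log s + Phat.eval s * y s + P.eval s * deriv b s := by
  filter_upwards [hy, hb, isOpen_slitPlane.mem_nhds ht] with s hys hbs hs
  rw [(hasDerivAt_mul_log_add hys hbs hs).deriv, hPhat, Polynomial.eval_mul, Polynomial.eval_X]
  field_simp [slitPlane_ne_zero hs]

theorem deriv_eval_mul_deriv_mul_log_add_add_eq_zero {P P1 Phat : Polynomial ℂ}
    (hPhat : P = Polynomial.X * Phat) {y b : ℂ → ℂ} {t : ℂ}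
    (hy : ∀ᶠ z in 𝓝 t, DifferentiableAt ℂ y z) (hb : ∀ᶠ z in 𝓝 t, DifferentiableAt ℂ b z)
    (hy' : DifferentiableAt ℂ (deriv y) t) (hb' : DifferentiableAt ℂ (deriv b) t)
    (ht : t ∈ slitPlane)
    (hyODE : deriv (fun s => P.eval s * deriv y s) t + P1.eval t * y t = 0)
    (hbODE : deriv (fun s => P.eval s * deriv b s) t + P1.eval t * b t
        + 2 * Phat.eval t * deriv y t + (Polynomial.derivative Phat).eval t * y t = 0) :
    deriv (fun s => P.eval s * deriv (fun z => y z * log z + b z) s) t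
      + P1.eval t * (y t * log t + b t) = 0 := by
  have hPy : HasDerivAt (fun s => P.eval s * deriv y s)
      (deriv (fun s => P.eval s * deriv y s) t) t :=
    (P.differentiableAt.mul hy').hasDerivAt
  have hPb : HasDerivAt (fun s => P.eval s * deriv b s)
      (deriv (fun s => P.eval s * deriv b s) t) t :=
    (P.differentiableAt.mul hb').hasDerivAt
  have hD : HasDerivAt
      (fun s => P.eval s * deriv y s * log s + Phat.eval s * y s + P.eval s * deriv b s) _ t :=
    ((hPy.mul (hasDerivAt_log ht)).add
      ((Phat.hasDerivAt t).mul hy.self_of_nhds.hasDerivAt)).add hPb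
  rw [(eval_mul_deriv_mul_log_add_eventuallyEq hPhat hy hb ht).deriv_eq, hD.deriv]
  have hPt : P.eval t = t * Phat.eval t := by simp [hPhat]
  linear_combination log t * hyODE + hbODE + Phat.eval t * deriv y t * mul_inv_cancel₀
    (slitPlane_ne_zero ht) + deriv y t * t⁻¹ * hPt

theorem stmt17_general (P P1 Phat : Polynomial ℂ)
    (hPhat : P = Polynomial.X * Phat)
    (r : ℝ) (y b : ℂ → ℂ)
    (hy : AnalyticOnNhd ℂ y (Metric.ball (0 : ℂ) r))
    (hb : AnalyticOnNhd ℂ b (Metric.ball (0 : ℂ) r))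
    (hyODE : ∀ t ∈ Metric.ball (0 : ℂ) r,
      deriv (fun s => P.eval s * deriv y s) t + P1.eval t * y t = 0)
    (hbODE : ∀ t ∈ Metric.ball (0 : ℂ) r,
      deriv (fun s => P.eval s * deriv b s) t + P1.eval t * b t
        + 2 * Phat.eval t * deriv y t + (Polynomial.derivative Phat).eval t * y t = 0) :
    ∀ t ∈ Metric.ball (0 : ℂ) r, t ∈ Complex.slitPlane →
      deriv (fun s => P.eval s * deriv (fun z => y z * Complex.log z + b z) s) t
        + P1.eval t * (y t * Complex.log t + b t) = 0 := by
  intro t ht hts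
  have hball : Metric.ball (0 : ℂ) r ∈ 𝓝 t := Metric.isOpen_ball.mem_nhds ht
  exact deriv_eval_mul_deriv_mul_log_add_add_eq_zero hPhat
    (eventually_of_mem hball fun z hz => (hy z hz).differentiableAt)
    (eventually_of_mem hball fun z hz => (hb z hz).differentiableAt)
    (hy.deriv t ht).differentiableAt (hb.deriv t ht).differentiableAt hts
    (hyODE t ht) (hbODE t ht)

/-- if `y`, `b` are analytic on `B(0,r)` with `(P·y')' + P1·y = 0` and
`(P·b')' + P1·b + 2·P̂·y' + P̂'·y = 0`, then `ŷ = y·log t + b` satisfies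
`(P·ŷ')' + P1·ŷ = 0` away from the closed negative real axis. -/
theorem stmt17 (P P1 Phat : Polynomial ℂ) (hP0 : P.eval 0 = 0)
    (hPhat : P = Polynomial.X * Phat)
    (r : ℝ) (hr : 0 < r) (y b : ℂ → ℂ)
    (hy : AnalyticOnNhd ℂ y (Metric.ball (0 : ℂ) r))
    (hb : AnalyticOnNhd ℂ b (Metric.ball (0 : ℂ) r))
    (hyODE : ∀ t ∈ Metric.ball (0 : ℂ) r,
      deriv (fun s => P.eval s * deriv y s) t + P1.eval t * y t = 0)
    (hbODE : ∀ t ∈ Metric.ball (0 : ℂ) r,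
      deriv (fun s => P.eval s * deriv b s) t + P1.eval t * b t
        + 2 * Phat.eval t * deriv y t + (Polynomial.derivative Phat).eval t * y t = 0) :
    ∀ t ∈ Metric.ball (0 : ℂ) r, t ∈ Complex.slitPlane →
      deriv (fun s => P.eval s * deriv (fun z => y z * Complex.log z + b z) s) t
        + P1.eval t * (y t * Complex.log t + b t) = 0 :=
  stmt17_general P P1 Phat hPhat r y b hy hb hyODE hbODE
end
end
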